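/- Roos-like spectral bound: Let C ⊆ F_q^{mℓ} be a λ-QT code of index ℓ with nonempty eigenvalue set Ω̄ ⊆ Ω. Let N and M be nonempty subsets of Ω such that MN := { εη/α : ε ∈ M, η ∈ N } ⊆ Ω̄, and let d_N be a positive integer such that every nonzero codeword of D_N has Hamming weight at least d_N. If there exists a consecutive set M′ ⊆ Ω with M ⊆ M′ and |M′| ≤ |M| + d_N − 2, then every nonzero codeword of C has Hamming weight at least min( |M| + d_N − 1, d(ℂ_{MN}) ), where ℂ_{MN} is the eigencode of ∩_{β∈MN} V_β. -/

import Mathlib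

open Polynomial

open scoped Classical in
/-- Hamming weight: the number of nonzero coordinates. -/
noncomputable def wt {ι K : Type*} [Fintype ι] [Zero K] (c : ι → K) : ℕ :=
  (Finset.univ.filter fun i => c i ≠ 0).card

/-- Minimum Hamming weight of a nonzero codeword of `S`, with `⊤` for the zero code. -/
noncomputable def minDist {ι K : Type*} [Fintype ι] [Zero K] (S : Set (ι → K)) : ℕ∞ :=
  sInf {n : ℕ∞ | ∃ c ∈ S, c ≠ 0 ∧ (wt c : ℕ∞) = n}

/-- The λ-constashift by ℓ positions on m×ℓ arrays: row 0 becomes λ times old last row. -/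
def rho {Fq : Type*} [Field Fq] (m ℓ : ℕ) [NeZero m] (lam : Fq)
    (c : ZMod m × Fin ℓ → Fq) : ZMod m × Fin ℓ → Fq :=
  fun p => (if p.1 = 0 then lam else 1) * c (p.1 - 1, p.2)

/-- Reduction of a vector of polynomials mod `X^m - λ`, written as an m×ℓ array. -/
noncomputable def arrOf {Fq : Type*} [Field Fq] (m ℓ : ℕ) [NeZero m] (lam : Fq)
    (v : Fin ℓ → Polynomial Fq) : ZMod m × Fin ℓ → Fq :=
  fun p => ((v p.2) %ₘ (Polynomial.X ^ m - Polynomial.C lam)).coeff (p.1).val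

/-- The λ-constacyclic code of length `m` over `F` with zero set `P`. -/
def Dcode {F : Type*} [Field F] (m : ℕ) (P : Set F) : Set (Fin m → F) :=
  {c | ∀ β ∈ P, ∑ k : Fin m, c k * β ^ (k : ℕ) = 0}

/-- A consecutive subset of Ω: `{αξ^(e+zn) : 0 ≤ z ≤ δ-2}` with `gcd(m,n) = 1`. -/
def IsConsecutive {F : Type*} [Field F] (m : ℕ) (α ξ : F) (E : Set F) : Prop :=
  ∃ e δ n : ℕ, 2 ≤ δ ∧ 0 < n ∧ Nat.Coprime m n ∧
    E = {x | ∃ z < δ - 1, x = α * ξ ^ (e + z * n)}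

/-- The eigenspace of `β` for the polynomial matrix `G`: the null space of `G(β)`. -/
def Vspace {Fq F : Type*} [Field Fq] [Field F] [Algebra Fq F] (ℓ : ℕ)
    (G : Matrix (Fin ℓ) (Fin ℓ) (Polynomial Fq)) (β : F) : Set (Fin ℓ → F) :=
  {v | (G.map fun p => Polynomial.aeval β p).mulVec v = 0}

/-- The eigencode of a set of vectors `V ⊆ F^ℓ`. -/
def eigencode {Fq F : Type*} [Field Fq] [Field F] [Algebra Fq F] (ℓ : ℕ)
    (V : Set (Fin ℓ → F)) : Set (Fin ℓ → Fq) :=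
  {u | ∀ v ∈ V, ∑ j, v j * algebraMap Fq F (u j) = 0}



/-!
Write a codeword `c` as an `m × ℓ` array. Its columns, read as polynomials, are an
`F_q[x]`-combination of the rows of `G̃`, so for every common eigenvector `v` of the
eigenvalues in `MN` the vector `y` obtained by pairing each row of `c` with `v` vanishes on `MN`.
If all these `y` are zero, every row of `c` lies in the eigencode `ℂ_{MN}`.

Otherwise Roos' argument applies to a nonzero `y`. The twists `y_i (ε/α)^i` with `ε ∈ M` lie in
`D_N` and are supported on `supp y`, so by the Singleton bound they span a space of dimension at
most `wt y + 1 - d_N`. Passing from `M` to the consecutive set `M'` adds at most `|M'| - |M|`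
dimensions, while a Vandermonde determinant shows that the twists over `M'` span a space of
dimension at least `min (|M'|, wt y)`. Comparing the two gives `wt y ≥ |M| + d_N - 1`.
-/

open Module

section Weight

variable {ι K : Type*} [Fintype ι] [Zero K]

lemma wt_eq_ncard_support (c : ι → K) : wt c = (Function.support c).ncard := by
  classical
  rw [wt, ← Set.ncard_coe_finset]
  congr
  ext
  simp

lemma one_le_wt {c : ι → K} (hc : c ≠ 0) : 1 ≤ wt c := by
  rw [wt_eq_ncard_support]
  exact (Set.ncard_pos).2 (Function.support_nonempty_iff.2 hc)

lemma wt_le_wt_of_support_subset_image {κ K' : Type*} [Fintype κ] [Zero K'] {y : ι → K}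
    {c : κ → K'} (f : κ → ι) (h : Function.support y ⊆ f '' Function.support c) :
    wt y ≤ wt c := by
  rw [wt_eq_ncard_support, wt_eq_ncard_support]
  exact (Set.ncard_le_ncard h).trans (Set.ncard_image_le (Set.toFinite _))

lemma minDist_le_wt {S : Set (ι → K)} {c : ι → K} (hc : c ∈ S) (hc0 : c ≠ 0) :
    minDist S ≤ wt c :=
  sInf_le ⟨c, hc, hc0, rfl⟩

end Weight

section Singleton

variable {F ι : Type*} [Field F] [Fintype ι]

lemma finrank_le_ncard_add_one_sub {S : Set ι} {U : Submodule F (ι → F)} {d : ℕ}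
    (hU : U ≤ Pi.spanSubset F S) (hd : ∀ u ∈ U, u ≠ 0 → d ≤ wt u) :
    finrank F U ≤ S.ncard + 1 - d := by
  obtain ⟨D, hDS, hD⟩ := Set.exists_subset_card_eq (s := S) (min_le_right (d - 1) S.ncard)
  -- a word of `U` supported on `D` has weight below `d`, so it is zero
  have hdisj : U ⊓ Pi.spanSubset F D = ⊥ := by
    refine (Submodule.eq_bot_iff _).2 fun u ⟨huU, huD⟩ => by_contra fun hu0 => ?_
    have hwt : wt u ≤ D.ncard := by
      rw [wt_eq_ncard_support]
      refine Set.ncard_le_ncard (fun i hi => ?_)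
      by_contra hiD
      exact hi (Pi.mem_spanSubset_iff.1 huD i hiD)
    have := hd u huU hu0
    have := one_le_wt hu0
    omega
  have hsup : finrank F ↥(U ⊔ Pi.spanSubset F D) ≤ S.ncard := by
    rw [← Pi.dim_spanSubset (R := F)]
    exact Submodule.finrank_mono (sup_le hU (Submodule.span_mono (Set.image_mono hDS)))
  have := Submodule.finrank_sup_add_finrank_inf_eq U (Pi.spanSubset F D)
  rw [hdisj, finrank_bot, Pi.dim_spanSubset] at this
  omega

end Singleton

section Span

variable {F X V : Type*} [Field F] [AddCommGroup V] [Module F V]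

lemma finrank_span_le_ncard {s : Set V} (hs : s.Finite) :
    finrank F (Submodule.span F s) ≤ s.ncard := by
  have := hs.fintype
  rw [Set.ncard_eq_toFinset_card']
  exact finrank_span_le_card s

lemma finrank_span_image_le_add_ncard_diff (f : X → V) {s t : Set X} (hst : s ⊆ t)
    (ht : t.Finite) :
    finrank F (Submodule.span F (f '' t)) ≤
      finrank F (Submodule.span F (f '' s)) + (t \ s).ncard := by
  have hfin : ∀ u ⊆ t, FiniteDimensional F (Submodule.span F (f '' u)) := fun u hu =>
    FiniteDimensional.span_of_finite F ((ht.subset hu).image f)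
  have := hfin s hst
  have := hfin (t \ s) Set.sdiff_subset
  have hle : Submodule.span F (f '' t) ≤
      Submodule.span F (f '' s) ⊔ Submodule.span F (f '' (t \ s)) := by
    rw [← Submodule.span_union, ← Set.image_union, Set.union_sdiff_cancel hst]
  calc finrank F (Submodule.span F (f '' t))
      ≤ finrank F ↥(Submodule.span F (f '' s) ⊔ Submodule.span F (f '' (t \ s))) :=
        Submodule.finrank_mono hle
    _ ≤ finrank F (Submodule.span F (f '' s)) + finrank F (Submodule.span F (f '' (t \ s))) :=
        Submodule.finrank_add_le_finrank_add_finrank _ _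
    _ ≤ finrank F (Submodule.span F (f '' s)) + (t \ s).ncard := by
        gcongr
        exact (finrank_span_le_ncard ((ht.sdiff).image f)).trans (Set.ncard_image_le ht.sdiff)

end Span

lemma linearIndependent_mul_pow {F ι : Type*} [Field F] [Fintype ι] {y b : ι → F}
    (hb : Set.InjOn b (Function.support y)) {t : ℕ} (ht : t ≤ wt y) :
    LinearIndependent F (fun (z : Fin t) (i : ι) => y i * b i ^ (z : ℕ)) := by
  classical
  obtain ⟨τ⟩ : Nonempty (Fin t ↪ Function.support y) :=
    Function.Embedding.nonempty_of_card_le (by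
      rwa [Fintype.card_fin, ← Nat.card_eq_fintype_card, Nat.card_coe_set_eq,
        ← wt_eq_ncard_support])
  have hdet : (Matrix.of fun (z k : Fin t) => y (τ k) * b (τ k) ^ (z : ℕ)).det ≠ 0 := by
    have hA : (Matrix.of fun (z k : Fin t) => y (τ k) * b (τ k) ^ (z : ℕ)) =
        (Matrix.vandermonde fun k => b (τ k)).transpose * Matrix.diagonal fun k => y (τ k) := by
      ext z k
      simp [Matrix.vandermonde, mul_comm]
    rw [hA, Matrix.det_mul, Matrix.det_transpose, Matrix.det_diagonal]
    refine mul_ne_zero (Matrix.det_vandermonde_ne_zero_iff.2 fun k k' h => ?_)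
      (Finset.prod_ne_zero_iff.2 fun k _ => (τ k).2)
    exact τ.injective (Subtype.ext (hb (τ k).2 (τ k').2 h))
  exact LinearIndependent.of_comp (LinearMap.funLeft F F fun k => (τ k : ι))
    (Matrix.linearIndependent_rows_of_det_ne_zero hdet)

section Roos

variable {F : Type*} [Field F] {m : ℕ}

def dcodeSubmodule (m : ℕ) (P : Set F) : Submodule F (Fin m → F) where
  carrier := Dcode m P
  add_mem' {a b} ha hb β hβ := by
    simp [add_mul, Finset.sum_add_distrib, ha β hβ, hb β hβ]
  zero_mem' β _ := by simp
  smul_mem' a c hc β hβ := by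
    simp [mul_assoc, ← Finset.mul_sum, hc β hβ]

def twist (y : Fin m → F) (γ : F) : Fin m → F := fun i => y i * γ ^ (i : ℕ)

lemma sum_twist_mul_pow (y : Fin m → F) (γ β : F) :
    ∑ i, twist y γ i * β ^ (i : ℕ) = ∑ i, y i * (γ * β) ^ (i : ℕ) := by
  simp only [twist, mul_pow, mul_assoc]

lemma support_twist (y : Fin m → F) {γ : F} (hγ : γ ≠ 0) :
    Function.support (twist y γ) = Function.support y := by
  ext i
  simp [twist, hγ]

lemma twist_mem_spanSubset (y : Fin m → F) (γ : F) :
    twist y γ ∈ Pi.spanSubset F (Function.support y) :=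
  Pi.mem_spanSubset_iff.2 fun i hi => by simp [twist, Function.notMem_support.1 hi]

variable {α ξ : F} {E : Set F}

lemma IsConsecutive.eq_image (hE : IsConsecutive m α ξ E) :
    ∃ e δ n : ℕ, m.Coprime n ∧ E = (fun z => α * ξ ^ (e + z * n)) '' Set.Iio (δ - 1) := by
  obtain ⟨e, δ, n, -, -, hcop, rfl⟩ := hE
  exact ⟨e, δ, n, hcop, by ext; simp [eq_comm]⟩

lemma IsConsecutive.finite (hE : IsConsecutive m α ξ E) : E.Finite := by
  obtain ⟨e, δ, n, -, rfl⟩ := hE.eq_image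
  exact (Set.finite_Iio _).image _

lemma IsConsecutive.ne_zero (hE : IsConsecutive m α ξ E) (hα : α ≠ 0) (hξ : ξ ≠ 0) :
    ∀ x ∈ E, x ≠ 0 := by
  obtain ⟨e, δ, n, -, rfl⟩ := hE.eq_image
  rintro _ ⟨z, -, rfl⟩
  exact mul_ne_zero hα (pow_ne_zero _ hξ)

lemma IsConsecutive.min_ncard_wt_le_finrank (hE : IsConsecutive m α ξ E)
    (hξ : IsPrimitiveRoot ξ m) (hα : α ≠ 0) (y : Fin m → F) :
    min E.ncard (wt y) ≤ finrank F (Submodule.span F ((fun ε => twist y (ε / α)) '' E)) := by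
  rcases eq_or_ne m 0 with rfl | hm
  · simp [wt]
  obtain ⟨e, δ, n, hcop, hE⟩ := hE.eq_image
  set t := min E.ncard (wt y)
  have hζ : IsPrimitiveRoot (ξ ^ n) m := hξ.pow_of_coprime n hcop.symm
  -- the twist by `α ξ ^ (e + z n) / α` is the twist by `ξ ^ e` times the Vandermonde row `z`
  set u : Fin t → Fin m → F := fun z i => twist y (ξ ^ e) i * ((ξ ^ n) ^ (i : ℕ)) ^ (z : ℕ)
  have hu : LinearIndependent F u := by
    refine linearIndependent_mul_pow (fun i _ j _ h => Fin.ext (hζ.pow_inj i.isLt j.isLt h)) ?_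
    rw [wt_eq_ncard_support, support_twist y (pow_ne_zero _ (hξ.ne_zero hm)),
      ← wt_eq_ncard_support]
    exact min_le_right _ _
  have hmem : ∀ z, u z ∈ (fun ε => twist y (ε / α)) '' E := by
    intro z
    have hz : (z : ℕ) < δ - 1 :=
      calc (z : ℕ) < t := z.isLt
        _ ≤ E.ncard := min_le_left _ _
        _ ≤ δ - 1 := hE ▸ (Set.ncard_image_le (Set.finite_Iio _)).trans (by simp)
    refine ⟨α * ξ ^ (e + z * n), hE ▸ ⟨z, hz, rfl⟩, ?_⟩
    funext i
    simp only [twist, u, mul_div_cancel_left₀ _ hα]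
    ring
  calc t = finrank F (Submodule.span F (Set.range u)) := by
        rw [finrank_span_eq_card hu, Fintype.card_fin]
    _ ≤ _ := Submodule.finrank_mono <|
        Submodule.span_le.2 (Set.range_subset_iff.2 fun z => Submodule.subset_span (hmem z))

theorem roos_bound (hξ : IsPrimitiveRoot ξ m) (hα : α ≠ 0) {M M' N : Set F} {d : ℕ}
    (hM : M.Nonempty) (hD : ∀ c ∈ Dcode m N, c ≠ 0 → d ≤ wt c)
    (hM' : IsConsecutive m α ξ M') (hMM' : M ⊆ M')
    (hcard : M'.ncard ≤ M.ncard + d - 2) {y : Fin m → F} (hy : y ≠ 0)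
    (hyz : y ∈ Dcode m {x | ∃ ε ∈ M, ∃ η ∈ N, x = ε * η / α}) :
    M.ncard + d - 1 ≤ wt y := by
  obtain ⟨i₀, hi₀⟩ := Function.ne_iff.1 hy
  set z : F → Fin m → F := fun ε => twist y (ε / α)
  have hzD : ∀ ε ∈ M, z ε ∈ Dcode m N := fun ε hε η hη => by
    rw [sum_twist_mul_pow]
    exact hyz _ ⟨ε, hε, η, hη, by ring⟩
  have hU : Submodule.span F (z '' M) ≤
      dcodeSubmodule m N ⊓ Pi.spanSubset F (Function.support y) :=
    Submodule.span_le.2 <| by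
      rintro _ ⟨ε, hε, rfl⟩
      exact ⟨hzD ε hε, twist_mem_spanSubset y _⟩
  have hsingleton := finrank_le_ncard_add_one_sub (hU.trans inf_le_right)
    fun u hu hu0 => hD u (hU hu).1 hu0
  rw [← wt_eq_ncard_support] at hsingleton
  obtain ⟨ε₀, hε₀⟩ := hM
  have hε₀z : Function.support (z ε₀) = Function.support y :=
    support_twist y (div_ne_zero (hM'.ne_zero hα (hξ.ne_zero i₀.pos.ne') _ (hMM' hε₀)) hα)
  have hd : d ≤ wt y := by
    rw [wt_eq_ncard_support, ← hε₀z, ← wt_eq_ncard_support]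
    refine hD _ (hzD ε₀ hε₀) fun h => hi₀ ?_
    simpa [h] using hε₀z.symm.subset hi₀
  have hupper := finrank_span_image_le_add_ncard_diff (F := F) z hMM' hM'.finite
  have hlower : min M'.ncard (wt y) ≤ finrank F (Submodule.span F (z '' M')) :=
    hM'.min_ncard_wt_le_finrank hξ hα y
  have hM₀ : 1 ≤ M.ncard := (Set.ncard_pos (hM'.finite.subset hMM')).2 ⟨ε₀, hε₀⟩
  have hMM'card := Set.ncard_le_ncard hMM' hM'.finite
  rw [Set.ncard_sdiff' hMM' hM'.finite] at hupper
  omega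

end Roos

section QuasiTwisted

variable {Fq F : Type*} [Field Fq] [Field F] [Algebra Fq F] {m ℓ : ℕ}

noncomputable def arrayPoly (c : ZMod m × Fin ℓ → Fq) : Fin ℓ → Fq[X] :=
  fun j => ∑ k : Fin m, C (c ((k : ℕ), j)) * X ^ (k : ℕ)

lemma arrOf_arrayPoly [NeZero m] (lam : Fq) (c : ZMod m × Fin ℓ → Fq) :
    arrOf m ℓ lam (arrayPoly c) = c := by
  funext ⟨a, j⟩
  have hdeg : (arrayPoly c j).degree < (X ^ m - C lam).degree := by
    rw [degree_X_pow_sub_C (Nat.pos_of_ne_zero (NeZero.ne m))]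
    exact degree_sum_fin_lt _
  rw [arrOf, (modByMonic_eq_self_iff (monic_X_pow_sub_C lam (NeZero.ne m))).2 hdeg, arrayPoly,
    finsetSum_coeff, Finset.sum_eq_single ⟨a.val, ZMod.val_lt a⟩]
  · simp
  · intro k _ hk
    rw [coeff_C_mul, coeff_X_pow, if_neg (fun h => hk (Fin.ext h.symm)), mul_zero]
  · simp

def rowPairing (v : Fin ℓ → F) (c : ZMod m × Fin ℓ → Fq) : Fin m → F :=
  fun i => ∑ j, v j * algebraMap Fq F (c ((i : ℕ), j))

lemma sum_rowPairing_mul_pow (v : Fin ℓ → F) (c : ZMod m × Fin ℓ → Fq) (β : F) :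
    ∑ i, rowPairing v c i * β ^ (i : ℕ) = ∑ j, v j * aeval β (arrayPoly c j) := by
  simp only [rowPairing, arrayPoly, map_sum, map_mul, aeval_C, aeval_X, map_pow, Finset.sum_mul,
    Finset.mul_sum, mul_assoc]
  exact Finset.sum_comm

lemma sum_mul_aeval_eq_zero_of_mem_span {G : Matrix (Fin ℓ) (Fin ℓ) Fq[X]} {p : Fin ℓ → Fq[X]}
    (hp : p ∈ Submodule.span Fq[X] (Set.range fun i j => G i j)) {β : F} {v : Fin ℓ → F}
    (hv : v ∈ Vspace ℓ G β) : ∑ j, v j * aeval β (p j) = 0 := by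
  induction hp using Submodule.span_induction with
  | mem _ hp =>
    obtain ⟨i, rfl⟩ := hp
    simpa [Matrix.mulVec, dotProduct, mul_comm] using congr_fun hv i
  | zero => simp
  | add p q _ _ hp hq => simp [mul_add, Finset.sum_add_distrib, hp, hq]
  | smul a p _ hp => simp [mul_left_comm _ (aeval β a), ← Finset.mul_sum, hp]

lemma rowPairing_mem_Dcode {G : Matrix (Fin ℓ) (Fin ℓ) Fq[X]} {c : ZMod m × Fin ℓ → Fq}
    (hc : arrayPoly c ∈ Submodule.span Fq[X] (Set.range fun i j => G i j)) {P : Set F}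
    {v : Fin ℓ → F} (hv : v ∈ ⋂ β ∈ P, Vspace ℓ G β) : rowPairing v c ∈ Dcode m P :=
  fun β hβ => by
    rw [sum_rowPairing_mul_pow]
    exact sum_mul_aeval_eq_zero_of_mem_span hc (Set.mem_iInter₂.1 hv β hβ)

lemma wt_rowPairing_le [NeZero m] (v : Fin ℓ → F) (c : ZMod m × Fin ℓ → Fq) :
    wt (rowPairing v c) ≤ wt c := by
  refine wt_le_wt_of_support_subset_image (fun p => (⟨p.1.val, ZMod.val_lt p.1⟩ : Fin m))
    fun i hi => ?_
  obtain ⟨j, -, hj⟩ := Finset.exists_ne_zero_of_sum_ne_zero hi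
  exact ⟨((i : ℕ), j), fun h => hj (by simp [h]), Fin.ext (ZMod.val_cast_of_lt i.isLt)⟩

lemma minDist_eigencode_le_wt [NeZero m] {V : Set (Fin ℓ → F)} {c : ZMod m × Fin ℓ → Fq}
    (hc : c ≠ 0) (h : ∀ v ∈ V, rowPairing v c = 0) :
    minDist (eigencode (Fq := Fq) ℓ V) ≤ wt c := by
  obtain ⟨⟨k, j⟩, hkj⟩ := Function.ne_iff.1 hc
  have hrow : (fun j => c (k, j)) ∈ eigencode ℓ V := fun v hv => by
    simpa [rowPairing, ZMod.natCast_zmod_val] using congr_fun (h v hv) ⟨k.val, ZMod.val_lt k⟩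
  calc minDist _ ≤ wt (fun j => c (k, j)) := minDist_le_wt hrow (Function.ne_iff.2 ⟨j, hkj⟩)
    _ ≤ wt c := ENat.natCast_le_natCast.2 <|
      wt_le_wt_of_support_subset_image Prod.snd fun j hj => ⟨(k, j), hj, rfl⟩

end QuasiTwisted

theorem roos_like_spectral_bound_general
    {Fq F : Type*} [Field Fq] [Fintype Fq] [Field F] [Algebra Fq F]
    (m ℓ : ℕ) [NeZero m]
    (lam : Fq) (hlam : lam ≠ 0)
    (𝓒 : Submodule Fq (ZMod m × Fin ℓ → Fq))
    (G : Matrix (Fin ℓ) (Fin ℓ) (Polynomial Fq))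
    (hGen : ∀ v : Fin ℓ → Polynomial Fq,
      arrOf m ℓ lam v ∈ 𝓒 ↔ v ∈ Submodule.span (Polynomial Fq) (Set.range fun i j => G i j))
    (r : ℕ) (hr : orderOf lam = r)
    (α : F) (hα : IsPrimitiveRoot α (r * m))
    (M N : Set F) (hM : M.Nonempty)
    (MN : Set F) (hMN : MN = {x : F | ∃ ε ∈ M, ∃ η ∈ N, x = ε * η / α})
    (dN : ℕ)
    (hDN : ∀ c ∈ Dcode (F := F) m N, c ≠ 0 → dN ≤ wt c)
    (M' : Set F) (hM'cons : IsConsecutive m α (α ^ r) M')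
    (hMM' : M ⊆ M') (hcard : M'.ncard ≤ M.ncard + dN - 2) :
    ∀ c ∈ 𝓒, c ≠ 0 →
      min ((M.ncard + dN - 1 : ℕ) : ℕ∞)
        (minDist (eigencode (Fq := Fq) ℓ (⋂ β ∈ MN, Vspace ℓ G β))) ≤ (wt c : ℕ∞) := by
  intro c hc hc0
  have hrm : 0 < r * m := by
    rw [← hr, ← Units.val_mk0 hlam, orderOf_units]
    exact Nat.mul_pos (orderOf_pos _) (NeZero.pos m)
  have hξ : IsPrimitiveRoot (α ^ r) m := hα.pow hrm rfl
  have hspan := (hGen (arrayPoly c)).1 (by rwa [arrOf_arrayPoly])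
  by_cases h : ∀ v ∈ ⋂ β ∈ MN, Vspace ℓ G β, rowPairing v c = 0
  · exact (min_le_right _ _).trans (minDist_eigencode_le_wt hc0 h)
  · push Not at h
    obtain ⟨v, hv, hy⟩ := h
    subst hMN
    have := roos_bound hξ (hα.ne_zero hrm.ne') hM hDN hM'cons hMM' hcard hy
      (rowPairing_mem_Dcode hspan hv)
    exact (min_le_left _ _).trans (ENat.natCast_le_natCast.2 (this.trans (wt_rowPairing_le v c)))

theorem roos_like_spectral_bound
    {Fq F : Type*} [Field Fq] [Fintype Fq] [Field F] [Algebra Fq F]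
    (m ℓ : ℕ) [NeZero m] (hcop : Nat.Coprime m (Fintype.card Fq))
    (lam : Fq) (hlam : lam ≠ 0)
    (hsplit : IsSplittingField Fq F (X ^ m - C lam))
    (𝓒 : Submodule Fq (ZMod m × Fin ℓ → Fq))
    (hQT : ∀ c ∈ 𝓒, rho m ℓ lam c ∈ 𝓒)
    (G : Matrix (Fin ℓ) (Fin ℓ) (Polynomial Fq))
    (htri : ∀ i j, j < i → G i j = 0)
    (hdiv : ∀ j, G j j ∣ X ^ m - C lam)
    (hGen : ∀ v : Fin ℓ → Polynomial Fq,
      arrOf m ℓ lam v ∈ 𝓒 ↔ v ∈ Submodule.span (Polynomial Fq) (Set.range fun i j => G i j))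
    (r : ℕ) (hr : orderOf lam = r)
    (α : F) (hα : IsPrimitiveRoot α (r * m))
    (hαm : α ^ m = algebraMap Fq F lam)
    (Ω : Set F) (hΩ : Ω = {x : F | ∃ k < m, x = α * (α ^ r) ^ k})
    (Ωbar : Set F) (hΩbar : Ωbar = {x ∈ Ω | Polynomial.aeval x G.det = 0})
    (hne : Ωbar.Nonempty)
    (M N : Set F) (hM : M.Nonempty) (hN : N.Nonempty)
    (hMΩ : M ⊆ Ω) (hNΩ : N ⊆ Ω)
    (MN : Set F) (hMN : MN = {x : F | ∃ ε ∈ M, ∃ η ∈ N, x = ε * η / α})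
    (hMNsub : MN ⊆ Ωbar)
    (dN : ℕ) (hdN : 0 < dN)
    (hDN : ∀ c ∈ Dcode (F := F) m N, c ≠ 0 → dN ≤ wt c)
    (M' : Set F) (hM'cons : IsConsecutive m α (α ^ r) M')
    (hMM' : M ⊆ M') (hcard : M'.ncard ≤ M.ncard + dN - 2) :
    ∀ c ∈ 𝓒, c ≠ 0 →
      min ((M.ncard + dN - 1 : ℕ) : ℕ∞)
        (minDist (eigencode (Fq := Fq) ℓ (⋂ β ∈ MN, Vspace ℓ G β))) ≤ (wt c : ℕ∞) :=
  roos_like_spectral_bound_general m ℓ lam hlam 𝓒 G hGen r hr α hα M N hM MN hMN dN hDN M' hM'cons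
    hMM' hcard
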